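/- arXiv:2201.09332 — 2 statements merged into one kernel-verified Lean document; each statement's English description precedes it below -/
import Mathlib

section
/- If Q is any real n×d matrix, then the row-wise softmax of the Gram matrix QQᵀ is a positive semidefinite matrix, i.e., softmax(QQᵀ) ⪰ 0, provided the row normalization constants are all equal. -/
open Matrix Finset

lemma exp_gram_quad {n d : ℕ} (Q : Matrix (Fin n) (Fin d) ℝ) (x : Fin n → ℝ) :
    0 ≤ ∑ i, ∑ j, x i * x j * Real.exp ((Q * Qᵀ) i j) := by
  have hs : ∀ (m : ℕ) (i j : Fin n), ((Q * Qᵀ) i j) ^ m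
      = ∑ f ∈ Fintype.piFinset (fun _ : Fin m => (Finset.univ : Finset (Fin d))),
          (∏ l, Q i (f l)) * (∏ l, Q j (f l)) := by
    intro m i j
    have h1 : (Q * Qᵀ) i j = ∑ k, Q i k * Q j k := by simp [Matrix.mul_apply]
    have h2 : (∑ k, Q i k * Q j k) ^ m = ∏ _l : Fin m, ∑ k, Q i k * Q j k := by
      simp [Finset.prod_const]
    rw [h1, h2, Finset.prod_univ_sum]
    simp [Finset.prod_mul_distrib]
  have key : ∀ m : ℕ, 0 ≤ ∑ i, ∑ j, x i * x j * (((Q * Qᵀ) i j) ^ m / m.factorial) := by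
    intro m
    have h2 : ∑ i, ∑ j, x i * x j * (((Q * Qᵀ) i j) ^ m / m.factorial)
        = (∑ f ∈ Fintype.piFinset (fun _ : Fin m => (Finset.univ : Finset (Fin d))),
            (∑ i, x i * ∏ l, Q i (f l)) ^ 2) / m.factorial := by
      simp_rw [hs, Finset.sum_div, Finset.mul_sum]
      conv_lhs => enter [2, i]; rw [Finset.sum_comm]
      rw [Finset.sum_comm]
      refine Finset.sum_congr rfl fun f _ => ?_
      rw [pow_two, Finset.sum_mul_sum, Finset.sum_div]
      refine Finset.sum_congr rfl fun i _ => ?_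
      rw [Finset.sum_div]
      refine Finset.sum_congr rfl fun j _ => ?_
      ring
    rw [h2]
    positivity
  have hexp : ∀ i j : Fin n, Real.exp ((Q * Qᵀ) i j)
      = ∑' m : ℕ, ((Q * Qᵀ) i j) ^ m / m.factorial := fun i j => by
    rw [Real.exp_eq_exp_ℝ, NormedSpace.exp_eq_tsum_div]
  have hsummable : ∀ (i j : Fin n),
      Summable (fun m : ℕ => x i * x j * (((Q * Qᵀ) i j) ^ m / m.factorial)) :=
    fun i j => (Real.summable_pow_div_factorial _).mul_left _
  calc (0:ℝ) ≤ ∑' m : ℕ, ∑ i, ∑ j, x i * x j * (((Q * Qᵀ) i j) ^ m / m.factorial) :=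
        tsum_nonneg key
    _ = ∑ i, ∑ j, x i * x j * Real.exp ((Q * Qᵀ) i j) := by
        rw [Summable.tsum_finsetSum (fun i _ => summable_sum fun j _ => hsummable i j)]
        refine Finset.sum_congr rfl fun i _ => ?_
        rw [Summable.tsum_finsetSum (fun j _ => hsummable i j)]
        refine Finset.sum_congr rfl fun j _ => ?_
        rw [hexp, tsum_mul_left]

theorem softmax_gram_posSemidef {n d : ℕ}
    (Q : Matrix (Fin n) (Fin d) ℝ)
    (heq : ∀ i j : Fin n,
      (∑ k, Real.exp ((Q * Qᵀ) i k)) = ∑ k, Real.exp ((Q * Qᵀ) j k)) :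
    (Matrix.of fun i j : Fin n =>
      Real.exp ((Q * Qᵀ) i j) / ∑ k, Real.exp ((Q * Qᵀ) i k)).PosSemidef := by
  have hsym : ∀ i j : Fin n, (Q * Qᵀ) j i = (Q * Qᵀ) i j := fun i j => by
    simp [Matrix.mul_apply, mul_comm]
  rw [Matrix.posSemidef_iff_dotProduct_mulVec]
  constructor
  · ext i j
    simp only [Matrix.conjTranspose_apply, Matrix.of_apply, star_trivial, hsym, heq j i]
  · intro x
    rcases Nat.eq_zero_or_pos n with hn | hn
    · subst hn
      simp [dotProduct]
    · have i0 : Fin n := ⟨0, hn⟩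
      have hc : 0 < ∑ k, Real.exp ((Q * Qᵀ) i0 k) := by
        have : Nonempty (Fin n) := ⟨i0⟩
        exact Finset.sum_pos (fun k _ => Real.exp_pos _) Finset.univ_nonempty
      have hform : star x ⬝ᵥ (Matrix.of fun i j : Fin n =>
            Real.exp ((Q * Qᵀ) i j) / ∑ k, Real.exp ((Q * Qᵀ) i k)).mulVec x
          = (∑ i, ∑ j, x i * x j * Real.exp ((Q * Qᵀ) i j))
              / ∑ k, Real.exp ((Q * Qᵀ) i0 k) := by
        simp only [dotProduct, Matrix.mulVec, Matrix.of_apply, star_trivial]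
        rw [Finset.sum_div]
        refine Finset.sum_congr rfl fun i _ => ?_
        rw [heq i i0, Finset.mul_sum, Finset.sum_div]
        refine Finset.sum_congr rfl fun j _ => ?_
        ring
      rw [hform]
      exact div_nonneg (exp_gram_quad Q x) hc.le
end

section
/- The minimum of ‖C − UFUᵀ‖_F over matrices C satisfying C·1 = 1 is bounded below by min_i |λ_i − 1| and above by max_i |λ_i − 1|, where λ_i are the diagonal entries of F. -/
open Matrix

/-- Frobenius norm of a square real matrix. -/
noncomputable def frobNorm {n : ℕ} (A : Matrix (Fin n) (Fin n) ℝ) : ℝ :=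
  Real.sqrt (∑ i, ∑ j, (A i j) ^ 2)

lemma mulVec_sq_sum {n : ℕ} (U : Matrix (Fin n) (Fin n) ℝ) (hU : Uᵀ * U = 1)
    (x : Fin n → ℝ) : ∑ i, (U.mulVec x i) ^ 2 = ∑ i, x i ^ 2 := by
  have h : U.mulVec x ⬝ᵥ U.mulVec x = x ⬝ᵥ x := by
    rw [Matrix.dotProduct_mulVec, ← Matrix.mulVec_transpose,
      Matrix.mulVec_mulVec, hU, Matrix.one_mulVec]
  simpa [dotProduct, sq] using h

theorem row_sum_constrained_error_bounds {n : ℕ} (hn : 0 < n)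
    (U : Matrix (Fin n) (Fin n) ℝ) (hU : Uᵀ * U = 1)
    (lam : Fin n → ℝ)
    (F : Matrix (Fin n) (Fin n) ℝ) (hF : F = Matrix.diagonal lam) :
    (∀ Cmat : Matrix (Fin n) (Fin n) ℝ,
        Cmat.mulVec (fun _ => 1) = (fun _ => (1 : ℝ)) →
        Finset.univ.inf' (Finset.univ_nonempty_iff.mpr
            (Fin.pos_iff_nonempty.mp hn)) (fun i => |lam i - 1|) ≤
          frobNorm (Cmat - U * F * Uᵀ)) ∧
    (∃ Cmat : Matrix (Fin n) (Fin n) ℝ,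
        Cmat.mulVec (fun _ => 1) = (fun _ => (1 : ℝ)) ∧
        frobNorm (Cmat - U * F * Uᵀ) ≤
          Finset.univ.sup' (Finset.univ_nonempty_iff.mpr
            (Fin.pos_iff_nonempty.mp hn)) (fun i => |lam i - 1|)) := by
  have hUUT : U * Uᵀ = 1 := mul_eq_one_comm.mp hU
  have hUTU2 : (Uᵀ)ᵀ * Uᵀ = 1 := by rwa [Matrix.transpose_transpose]
  set v : Fin n → ℝ := fun _ => 1 with hv
  set b : Fin n → ℝ := Uᵀ.mulVec v with hb
  -- sum of b² = n
  have hbsum : ∑ i, (b i) ^ 2 = (n : ℝ) := by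
    rw [hb, mulVec_sq_sum Uᵀ hUTU2]
    simp [hv]
  -- A v = U.mulVec (λ·b)
  have hDb : (Matrix.diagonal lam).mulVec (Uᵀ.mulVec v) = fun i => lam i * b i := by
    ext i
    simp [Matrix.mulVec_diagonal, hb]
  have hAv : (U * F * Uᵀ).mulVec v = U.mulVec (fun i => lam i * b i) := by
    rw [hF, ← Matrix.mulVec_mulVec, ← Matrix.mulVec_mulVec, hDb]
  have hvU : v = U.mulVec b := by
    rw [hb, Matrix.mulVec_mulVec, hUUT, Matrix.one_mulVec]
  -- residual r = v - A v
  have hfun : (fun i => (1 - lam i) * b i) = b - fun i => lam i * b i := by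
    ext i
    simp [sub_mul]
  have hres : v - (U * F * Uᵀ).mulVec v = U.mulVec (fun i => (1 - lam i) * b i) := by
    rw [hAv]
    conv_lhs => rw [hvU]
    rw [← Matrix.mulVec_sub, hfun]
  have hressq : ∑ i, ((v - (U * F * Uᵀ).mulVec v) i) ^ 2
      = ∑ i, ((1 - lam i) * b i) ^ 2 := by
    rw [hres, mulVec_sq_sum U hU]
  constructor
  · -- lower bound
    intro Cmat hC
    set m := Finset.univ.inf' (Finset.univ_nonempty_iff.mpr
        (Fin.pos_iff_nonempty.mp hn)) (fun i => |lam i - 1|) with hm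
    have hmnn : 0 ≤ m := by
      rw [hm]
      apply Finset.le_inf'
      intro i _
      exact abs_nonneg _
    have hmle : ∀ i, m ≤ |lam i - 1| := fun i =>
      Finset.inf'_le _ (Finset.mem_univ i)
    set M := Cmat - U * F * Uᵀ with hM
    -- M v = v - A v
    have hMv : M.mulVec v = v - (U * F * Uᵀ).mulVec v := by
      rw [hM, Matrix.sub_mulVec, hC]
    -- key chain: m^2 * n ≤ ∑ ((1-λ)b)^2 = ∑ (Mv)_i^2 ≤ n * ∑∑ M_ij^2
    have h1 : m ^ 2 * (n : ℝ) ≤ ∑ i, ((1 - lam i) * b i) ^ 2 := by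
      rw [← hbsum, Finset.mul_sum]
      apply Finset.sum_le_sum
      intro i _
      rw [mul_pow]
      apply mul_le_mul_of_nonneg_right _ (sq_nonneg _)
      have := hmle i
      calc m ^ 2 ≤ |lam i - 1| ^ 2 := by
            apply pow_le_pow_left₀ hmnn this 2
        _ = (1 - lam i) ^ 2 := by rw [sq_abs]; ring
    have h2 : ∑ i, ((1 - lam i) * b i) ^ 2 ≤ (n : ℝ) * ∑ i, ∑ j, (M i j) ^ 2 := by
      rw [← hressq, ← hMv]
      rw [Finset.mul_sum]
      apply Finset.sum_le_sum
      intro i _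
      have : M.mulVec v i = ∑ j, M i j := by
        simp [Matrix.mulVec, dotProduct, hv]
      rw [this]
      have := sq_sum_le_card_mul_sum_sq (s := Finset.univ) (f := fun j => M i j)
      simpa using this
    have hS : m ^ 2 ≤ ∑ i, ∑ j, (M i j) ^ 2 := by
      have hn' : (0 : ℝ) < n := by exact_mod_cast hn
      nlinarith [h1, h2]
    calc m = Real.sqrt (m ^ 2) := by rw [Real.sqrt_sq hmnn]
      _ ≤ frobNorm M := Real.sqrt_le_sqrt hS
  · -- upper bound
    set Mx := Finset.univ.sup' (Finset.univ_nonempty_iff.mpr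
        (Fin.pos_iff_nonempty.mp hn)) (fun i => |lam i - 1|) with hMx
    have hMxge : ∀ i, |lam i - 1| ≤ Mx := fun i =>
      Finset.le_sup' (fun i => |lam i - 1|) (Finset.mem_univ i)
    have hMxnn : 0 ≤ Mx :=
      le_trans (abs_nonneg (lam ⟨0, hn⟩ - 1)) (hMxge ⟨0, hn⟩)
    set d : Fin n → ℝ := fun i => (v - (U * F * Uᵀ).mulVec v) i / n with hd
    set D : Matrix (Fin n) (Fin n) ℝ := Matrix.of (fun i (_ : Fin n) => d i) with hD
    refine ⟨(U * F * Uᵀ) + D, ?_, ?_⟩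
    · ext i
      rw [Matrix.add_mulVec]
      have : D.mulVec v i = n * d i := by
        simp [hD, Matrix.mulVec, dotProduct, hv, mul_comm]
      simp only [Pi.add_apply, this]
      rw [hd]
      have hn' : (n : ℝ) ≠ 0 := by positivity
      field_simp
      rw [Pi.sub_apply]; ring
    · have hsub : (U * F * Uᵀ) + D - U * F * Uᵀ
          = D := add_sub_cancel_left _ _
      rw [hsub]
      have hS : ∑ i, ∑ j, (D i j) ^ 2 ≤ Mx ^ 2 := by
        have hn' : (0 : ℝ) < n := by exact_mod_cast hn
        have : ∑ i, ∑ j, (D i j) ^ 2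
            = ∑ i, (n : ℝ) * (d i) ^ 2 := by
          apply Finset.sum_congr rfl
          intro i _
          have : ∀ j : Fin n, D i j = d i := fun j => rfl
          rw [Finset.sum_congr rfl (fun j _ => by rw [this j]), Finset.sum_const]
          simp
        rw [this]
        have hdsq : ∀ i, (n:ℝ) * d i ^ 2 = ((v - (U * F * Uᵀ).mulVec v) i)^2 / n := by
          intro i
          rw [hd]
          field_simp
        rw [Finset.sum_congr rfl (fun i _ => hdsq i), ← Finset.sum_div, hressq]
        rw [div_le_iff₀ hn']
        calc ∑ i, ((1 - lam i) * b i) ^ 2 ≤ ∑ i, Mx ^ 2 * (b i) ^ 2 := by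
              apply Finset.sum_le_sum
              intro i _
              rw [mul_pow]
              apply mul_le_mul_of_nonneg_right _ (sq_nonneg _)
              calc (1 - lam i) ^ 2 = |lam i - 1| ^ 2 := by
                    rw [sq_abs]; ring
                _ ≤ Mx ^ 2 := pow_le_pow_left₀ (abs_nonneg _) (hMxge i) 2
          _ = Mx ^ 2 * (n:ℝ) := by rw [← Finset.mul_sum, hbsum]
      calc frobNorm (D) ≤ Real.sqrt (Mx ^ 2) :=
            Real.sqrt_le_sqrt hS
        _ = Mx := Real.sqrt_sq hMxnn
end
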